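/- If φ(t) = λ₁(t)Z(θ(t)) + λ₂ vanishes identically on a nondegenerate interval S, ω > 0, and λ₁(t) ≠ 0 on S, then Z'(θ(t)) = 0 for all t in S. -/

import Mathlib

/-! Along the dynamics the control terms cancel in φ' = λ₁' Z(θ) + λ₁ Z'(θ) θ', leaving
φ' = ω λ₁ Z'(θ). Since φ vanishes on a nondegenerate interval, φ' = 0 there, and ω λ₁ ≠ 0. -/

theorem HasDerivWithinAt.eq_zero_of_forall_mem_eq_const {𝕜 F : Type*} [NontriviallyNormedField 𝕜]
    [NormedAddCommGroup F] [NormedSpace 𝕜 F] {f : 𝕜 → F} {f' c : F} {s : Set 𝕜} {x : 𝕜}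
    (hf : HasDerivWithinAt f f' s x) (hs : UniqueDiffWithinAt 𝕜 s x) (hx : x ∈ s)
    (hc : ∀ y ∈ s, f y = c) : f' = 0 :=
  hs.eq_deriv s hf ((hasDerivWithinAt_const x s c).congr_of_mem hc hx)

theorem hasDerivAt_switchingFunction {Z θ u lam1 : ℝ → ℝ} {ω lam2 t : ℝ}
    (hZ : DifferentiableAt ℝ Z (θ t)) (hθ : HasDerivAt θ (ω + Z (θ t) * u t) t)
    (hlam1 : HasDerivAt lam1 (-(lam1 t) * u t * deriv Z (θ t)) t) :
    HasDerivAt (fun s => lam1 s * Z (θ s) + lam2) (lam1 t * deriv Z (θ t) * ω) t := by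
  have h : HasDerivAt (fun s => lam1 s * Z (θ s) + lam2)
      (-(lam1 t) * u t * deriv Z (θ t) * Z (θ t) + lam1 t * (deriv Z (θ t) * (ω + Z (θ t) * u t)))
      t :=
    (hlam1.mul (hZ.hasDerivAt.comp t hθ)).add_const lam2
  exact h.congr_deriv (by ring)

theorem singular_arc_forces_Z_deriv_zero
    (Z : ℝ → ℝ) (hZ : ContDiff ℝ 1 Z)
    (ω lam2 : ℝ) (hω : 0 < ω)
    (u θ lam1 : ℝ → ℝ)
    (hθ : ∀ t, HasDerivAt θ (ω + Z (θ t) * u t) t)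
    (hlam1 : ∀ t, HasDerivAt lam1 (-(lam1 t) * u t * deriv Z (θ t)) t)
    (τ1 τ2 : ℝ) (hτ : τ1 < τ2)
    (hlamne : ∀ t ∈ Set.Icc τ1 τ2, lam1 t ≠ 0)
    (hφ : ∀ t ∈ Set.Icc τ1 τ2, lam1 t * Z (θ t) + lam2 = 0) :
    ∀ t ∈ Set.Icc τ1 τ2, deriv Z (θ t) = 0 := by
  intro t ht
  have hφ' : HasDerivAt (fun s => lam1 s * Z (θ s) + lam2) (lam1 t * deriv Z (θ t) * ω) t :=
    hasDerivAt_switchingFunction (hZ.differentiable one_ne_zero _) (hθ t) (hlam1 t)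
  have hφ'_zero : lam1 t * deriv Z (θ t) * ω = 0 :=
    hφ'.hasDerivWithinAt.eq_zero_of_forall_mem_eq_const (uniqueDiffOn_Icc hτ t ht) ht hφ
  simpa [hlamne t ht, hω.ne'] using hφ'_zero
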